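/- Let Z_1,...,Z_{n+1} be exchangeable real-valued random variables, almost surely distinct, and let R ⊆ R be a set constructed symmetrically from the multiset {Z_1,...,Z_{n+1}} containing at most ⌈(1−α)(n+1)⌉ of the points Z_i and satisfying the empirical coverage of exactly the ⌈(1−α)(n+1)⌉ smallest order statistics. Then P(Z_{n+1} ∈ R) = ⌈(1−α)(n+1)⌉/(n+1), which lies in [1−α, 1−α + 1/(n+1)]. -/

import Mathlib

open MeasureTheory ENNReal
open scoped Classical

/-!
Almost surely the values `Z_i` are distinct, so their ranks are a permutation of `1, …, n + 1`
and exactly `k` of them have rank at most `k`. Taking expectations, the probabilities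
`P(rank Z_j ≤ k)` sum to `k`; by exchangeability they are all equal, hence each is `k / (n + 1)`.
Finally `Z_{n+1} ≤ Z_{(k)}` holds exactly when the rank of `Z_{n+1}` is at most `k`.
-/

open Finset

namespace OrderStatistic

section LinearOrder

variable {ι α : Type*} [Fintype ι] [LinearOrder α]

def countLE (x : ι → α) (t : α) : ℕ := #{i | x i ≤ t}

def rank (x : ι → α) (j : ι) : ℕ := countLE x (x j)

lemma countLE_mono (x : ι → α) : Monotone (countLE x) :=
  fun _ _ hst => card_le_card <| monotone_filter_right _ fun _ _ hi => hi.trans hst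

lemma countLE_lt_rank {x : ι → α} {t : α} {j : ι} (h : t < x j) : countLE x t < rank x j := by
  refine card_lt_card ⟨monotone_filter_right _ fun _ _ hi => hi.trans h.le, fun hsub => ?_⟩
  have := hsub (mem_filter.2 ⟨mem_univ j, le_rfl⟩)
  exact (mem_filter.1 this).2.not_gt h

lemma rank_le_rank_iff {x : ι → α} {i j : ι} : rank x i ≤ rank x j ↔ x i ≤ x j :=
  ⟨fun h => not_lt.1 fun hlt => (countLE_lt_rank hlt).not_ge h, fun h => countLE_mono x h⟩

lemma rank_injective {x : ι → α} (hx : Function.Injective x) : Function.Injective (rank x) :=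
  fun _ _ h => hx <| le_antisymm (rank_le_rank_iff.1 h.le) (rank_le_rank_iff.1 h.ge)

lemma rank_mem_Icc (x : ι → α) (j : ι) : rank x j ∈ Icc 1 (Fintype.card ι) :=
  mem_Icc.2 ⟨card_pos.2 ⟨j, mem_filter.2 ⟨mem_univ j, le_rfl⟩⟩, card_le_univ _⟩

lemma image_rank {x : ι → α} (hx : Function.Injective x) :
    univ.image (rank x) = Icc 1 (Fintype.card ι) :=
  eq_of_subset_of_card_le (image_subset_iff.2 fun j _ => rank_mem_Icc x j) <| by
    rw [card_image_of_injective _ (rank_injective hx), Nat.card_Icc, card_univ]; omega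

lemma card_rank_le {x : ι → α} (hx : Function.Injective x) {k : ℕ}
    (hk : k ≤ Fintype.card ι) : #{j | rank x j ≤ k} = k := by
  have h := congrArg card (filter_image (s := univ) (f := rank x) (p := (· ≤ k)))
  rw [card_image_of_injective _ (rank_injective hx), image_rank hx,
    show {m ∈ Icc 1 (Fintype.card ι) | m ≤ k} = Icc 1 k by ext; simp only [mem_filter, mem_Icc]; omega, Nat.card_Icc] at h
  omega

lemma exists_rank_eq {x : ι → α} (hx : Function.Injective x) {k : ℕ} (hk₁ : 1 ≤ k)
    (hk : k ≤ Fintype.card ι) : ∃ j, rank x j = k := by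
  simpa [← image_rank hx] using mem_Icc.2 ⟨hk₁, hk⟩

lemma isLeast_countLE {x : ι → α} {j : ι} :
    IsLeast {t | rank x j ≤ countLE x t} (x j) :=
  ⟨le_rfl (a := rank x j), fun _ ht => not_lt.1 fun hlt => (countLE_lt_rank hlt).not_ge ht⟩

lemma rank_comp_perm (x : ι → α) (σ : Equiv.Perm ι) (j : ι) :
    rank (x ∘ σ) j = rank x (σ j) :=
  card_equiv σ fun _ => by simp

end LinearOrder

lemma le_sInf_iff_rank_le {ι α : Type*} [Fintype ι] [ConditionallyCompleteLinearOrder α]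
    {x : ι → α} (hx : Function.Injective x) {k : ℕ} (hk₁ : 1 ≤ k) (hk : k ≤ Fintype.card ι)
    (i : ι) : x i ≤ sInf {t | k ≤ countLE x t} ↔ rank x i ≤ k := by
  obtain ⟨j, rfl⟩ := exists_rank_eq hx hk₁ hk
  rw [isLeast_countLE.csInf_eq, rank_le_rank_iff]

section Measure

variable {ι α : Type*} [Fintype ι] [LinearOrder α] [TopologicalSpace α] [OrderClosedTopology α]
  [SecondCountableTopology α] [MeasurableSpace α] [OpensMeasurableSpace α]

lemma measurableSet_rank_le (j : ι) (k : ℕ) : MeasurableSet {x : ι → α | rank x j ≤ k} := by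
  have hrank : Measurable fun x : ι → α => rank x j := by
    simp only [rank, countLE, card_filter]
    exact Finset.measurable_sum _ fun i _ => Measurable.ite
      (measurableSet_le (measurable_pi_apply i) (measurable_pi_apply j)) measurable_const
      measurable_const
  exact hrank measurableSet_Iic

lemma measurableSet_injective : MeasurableSet {x : ι → α | Function.Injective x} := by
  simp only [Function.Injective, Set.ofPred_forall]
  exact .iInter fun i => .iInter fun j =>
    (measurableSet_eq_fun (measurable_pi_apply i) (measurable_pi_apply j)).imp
      (.const _)

variable {μ : Measure (ι → α)}

lemma measure_rank_le_eq_of_perm_invariant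
    (hμ : ∀ σ : Equiv.Perm ι, μ.map (· ∘ σ) = μ) (i j : ι) (k : ℕ) :
    μ {x | rank x i ≤ k} = μ {x | rank x j ≤ k} := by
  have hσ : Measurable fun x : ι → α => x ∘ Equiv.swap i j := by fun_prop
  conv_lhs => rw [← hμ (Equiv.swap i j), Measure.map_apply hσ (measurableSet_rank_le i k)]
  congr 1
  ext x
  simp [rank_comp_perm]

lemma sum_measure_rank_le [IsProbabilityMeasure μ] (hinj : ∀ᵐ x ∂μ, Function.Injective x)
    {k : ℕ} (hk : k ≤ Fintype.card ι) : ∑ j, μ {x | rank x j ≤ k} = k := by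
  calc ∑ j, μ {x | rank x j ≤ k}
      = ∫⁻ x, ∑ j, {x : ι → α | rank x j ≤ k}.indicator 1 x ∂μ := by
        rw [lintegral_finsetSum _ fun j _ => measurable_one.indicator (measurableSet_rank_le j k)]
        simp only [lintegral_indicator_one (measurableSet_rank_le _ k)]
    _ = ∫⁻ _, (k : ℝ≥0∞) ∂μ := by
        refine lintegral_congr_ae (hinj.mono fun x hx => ?_)
        rw [← congrArg (Nat.cast : ℕ → ℝ≥0∞) (card_rank_le hx hk), card_filter]
        push_cast
        simp only [Set.indicator_apply, Set.mem_ofPred_eq, Pi.one_apply]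
    _ = k := by simp

theorem measure_rank_le_of_perm_invariant [IsProbabilityMeasure μ]
    (hμ : ∀ σ : Equiv.Perm ι, μ.map (· ∘ σ) = μ) (hinj : ∀ᵐ x ∂μ, Function.Injective x)
    {k : ℕ} (hk : k ≤ Fintype.card ι) (j : ι) :
    μ {x | rank x j ≤ k} = k / Fintype.card ι := by
  have hcard : (Fintype.card ι : ℝ≥0∞) ≠ 0 := by
    simpa using (Fintype.card_pos_iff.2 ⟨j⟩).ne'
  rw [ENNReal.eq_div_iff hcard (by simp), ← sum_measure_rank_le hinj hk,
    Finset.sum_congr rfl fun i _ => measure_rank_le_eq_of_perm_invariant hμ i j k]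
  simp

end Measure

end OrderStatistic

lemma natCeil_mul_div_mem_Icc {p N : ℝ} (hp : 0 ≤ p) (hN : 0 < N) :
    (⌈p * N⌉₊ : ℝ) / N ∈ Set.Icc p (p + 1 / N) := by
  have hle : p * N ≤ ⌈p * N⌉₊ := Nat.le_ceil _
  have hlt : (⌈p * N⌉₊ : ℝ) < p * N + 1 := Nat.ceil_lt_add_one (by positivity)
  constructor
  · rwa [le_div_iff₀ hN]
  · rw [div_le_iff₀ hN, add_mul, one_div_mul_cancel hN.ne']
    exact hlt.le

open OrderStatistic in
theorem stmt17 {Ω : Type*} [MeasurableSpace Ω] (P : Measure Ω) [IsProbabilityMeasure P]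
    (n : ℕ) (Z : Fin (n + 1) → Ω → ℝ) (hZ : ∀ i, Measurable (Z i))
    (hexch : ∀ σ : Equiv.Perm (Fin (n + 1)),
      Measure.map (fun ω i => Z (σ i) ω) P = Measure.map (fun ω i => Z i ω) P)
    (hdist : ∀ᵐ ω ∂P, Function.Injective (fun i => Z i ω))
    (α : ℝ) (hα : α ∈ Set.Ioo (0 : ℝ) 1)
    (k : ℕ) (hk : k = (⌈(1 - α) * (n + 1 : ℝ)⌉).toNat)
    -- `Q ω` is the `k`-th order statistic `Z_{(k)}` of `Z_1 ω, ..., Z_{n+1} ω`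
    (Q : Ω → ℝ)
    (hQ : ∀ ω, Q ω = sInf {t : ℝ |
      k ≤ (Finset.univ.filter (fun i : Fin (n + 1) => Z i ω ≤ t)).card}) :
    P {ω | Z (Fin.last n) ω ∈ Set.Iic (Q ω)} = (k : ℝ≥0∞) / (n + 1) ∧
    (k : ℝ) / (n + 1) ∈ Set.Icc (1 - α) (1 - α + 1 / (n + 1)) := by
  obtain ⟨hα₀, hα₁⟩ := hα
  rw [Int.ceil_toNat] at hk
  have hk₁ : 1 ≤ k := by
    rw [hk, Nat.one_le_ceil_iff]
    exact mul_pos (by linarith) (by positivity)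
  have hkn : k ≤ Fintype.card (Fin (n + 1)) := by
    rw [hk, Fintype.card_fin, Nat.ceil_le]
    push_cast
    nlinarith
  refine ⟨?_, hk ▸ natCeil_mul_div_mem_Icc (by linarith) (by positivity)⟩
  set V : Ω → Fin (n + 1) → ℝ := fun ω i => Z i ω
  have hV : Measurable V := measurable_pi_lambda _ hZ
  have : IsProbabilityMeasure (P.map V) := Measure.isProbabilityMeasure_map hV.aemeasurable
  have hevent : {ω | Z (Fin.last n) ω ∈ Set.Iic (Q ω)} =ᵐ[P]
      V ⁻¹' {x | rank x (Fin.last n) ≤ k} := by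
    filter_upwards [hdist] with ω hω
    simp only [Set.mem_Iic, hQ]
    exact propext (le_sInf_iff_rank_le hω hk₁ hkn _)
  have hperm : ∀ σ : Equiv.Perm (Fin (n + 1)), (P.map V).map (· ∘ σ) = P.map V := fun σ => by
    rw [Measure.map_map (by fun_prop) hV]
    exact hexch σ
  have hinj : ∀ᵐ x ∂P.map V, Function.Injective x :=
    (ae_map_iff hV.aemeasurable measurableSet_injective).2 hdist
  rw [measure_congr hevent, ← Measure.map_apply hV (measurableSet_rank_le _ _),
    measure_rank_le_of_perm_invariant hperm hinj hkn, Fintype.card_fin]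
  norm_num
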